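/- Suppose A is a linear operator on real polynomials with A(1) = 0, and ν is a compactly supported probability measure such that A(y·p(y))(x) − x·A(p)(x) = ∫ (p(y)−p(x))/(y−x) ν_x(dy) for all polynomials p and all x. Then for all n ≥ 0, A(y^n)(x) = ∫ [ (y^n − x^n)/(y−x)² − n x^{n-1}/(y−x) ] ν_x(dy), where the integrand is interpreted as the polynomial ∂/∂x ((y^n − x^n)/(y − x)) in y. -/

import Mathlib

/-!
Put `p = X ^ n` in the commutator relation. Since `(y ^ n - x ^ n) / (y - x)` is the geometric sum
`∑ i < n, y ^ i x ^ (n - 1 - i)`, this gives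
`A(X ^ (n + 1))(x) = x A(X ^ n)(x) + ∫ ∑ i < n, y ^ i x ^ (n - 1 - i) dν_x`, starting from `A(1) = 0`.
The claimed integrands satisfy the same recursion in `n`, and polynomials are integrable against the
compactly supported `ν_x`, so induction on `n` concludes.
-/

open MeasureTheory Polynomial Finset

theorem Continuous.integrable_of_measure_compl_isCompact_eq_zero {X E : Type*}
    [TopologicalSpace X] [MeasurableSpace X] [OpensMeasurableSpace X] [T2Space X]
    [NormedAddCommGroup E] {μ : Measure X} [IsFiniteMeasureOnCompacts μ] {f : X → E}
    (hf : Continuous f) {K : Set X} (hK : IsCompact K) (hμK : μ Kᶜ = 0) :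
    Integrable f μ := by
  rw [← Measure.restrict_eq_self_of_ae_mem (ae_iff.mpr hμK)]
  exact hf.continuousOn.integrableOn_compact hK

theorem Polynomial.eval_divByMonic_X_sub_C_pow {R : Type*} [CommRing R] (n : ℕ) (x y : R) :
    ((X ^ n - C ((X ^ n : R[X]).eval x)) /ₘ (X - C x)).eval y
      = ∑ i ∈ range n, y ^ i * x ^ (n - 1 - i) := by
  have hfactor : X ^ n - C ((X ^ n : R[X]).eval x)
      = (X - C x) * ∑ i ∈ range n, X ^ i * C x ^ (n - 1 - i) := by
    rw [mul_comm, geom_sum₂_mul, eval_pow, eval_X, C_pow]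
  rw [hfactor, mul_divByMonic_cancel_left _ (monic_X_sub_C x)]
  simp [eval_finsetSum]

theorem sum_range_natSub_mul_pow {R : Type*} [CommRing R] (n : ℕ) (x y : R) :
    ∑ k ∈ range n, ((n - k : ℕ) : R) * y ^ k * x ^ (n - 1 - k)
      = x * ∑ k ∈ range (n - 1), ((n - 1 - k : ℕ) : R) * y ^ k * x ^ (n - 2 - k)
        + ∑ k ∈ range n, y ^ k * x ^ (n - 1 - k) := by
  rcases n with _ | m
  · simp
  have hshift : x * ∑ k ∈ range m, ((m - k : ℕ) : R) * y ^ k * x ^ (m - 1 - k)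
      = ∑ k ∈ range (m + 1), ((m - k : ℕ) : R) * y ^ k * x ^ (m - k) := by
    rw [sum_range_succ, Nat.sub_self, Nat.cast_zero, zero_mul, zero_mul, add_zero, mul_sum]
    refine sum_congr rfl fun k hk => ?_
    rw [show m - k = m - 1 - k + 1 by have := mem_range.mp hk; omega, pow_succ]
    ring
  simp only [Nat.add_sub_cancel, show m + 1 - 2 = m - 1 by omega, hshift, ← sum_add_distrib]
  refine sum_congr rfl fun k hk => ?_
  rw [show m + 1 - k = m - k + 1 by have := mem_range.mp hk; omega]
  push_cast
  ring

theorem generator_from_commutator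
    (ν : ℝ → Measure ℝ) (hprob : ∀ x, IsProbabilityMeasure (ν x))
    (hsupp : ∀ x, ∃ K : Set ℝ, IsCompact K ∧ ν x Kᶜ = 0)
    (A : Polynomial ℝ →ₗ[ℝ] Polynomial ℝ)
    (hA1 : A 1 = 0)
    (hcomm : ∀ (p : Polynomial ℝ) (x : ℝ),
      (A (X * p)).eval x - x * (A p).eval x
        = ∫ y, ((p - C (p.eval x)) /ₘ (X - C x)).eval y ∂(ν x)) :
    ∀ (n : ℕ) (x : ℝ),
      (A (X ^ n)).eval x
        = ∫ y, (∑ k ∈ Finset.range (n - 1),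
            ((n - 1 - k : ℕ) : ℝ) * y ^ k * x ^ (n - 2 - k)) ∂(ν x) := by
  intro n x
  obtain ⟨K, hK, hνK⟩ := hsupp x
  have integrable {f : ℝ → ℝ} (hf : Continuous f) : Integrable f (ν x) :=
    hf.integrable_of_measure_compl_isCompact_eq_zero hK hνK
  induction n with
  | zero => simp [hA1]
  | succ n ih =>
    have hstep := hcomm (X ^ n) x
    simp only [← pow_succ', eval_divByMonic_X_sub_C_pow] at hstep
    rw [eq_add_of_sub_eq' hstep, ih, ← integral_const_mul,
      ← integral_add (integrable (by fun_prop)) (integrable (by fun_prop))]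
    simp only [Nat.add_sub_cancel, show n + 1 - 2 = n - 1 by omega, sum_range_natSub_mul_pow]
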